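/- arXiv:2310.19805 — 2 statements merged into one kernel-verified Lean document; each statement's English description precedes it below -/
import Mathlib

section
/- (Soft Policy Evaluation, Lemma 1) The soft Bellman operator T^π has a unique fixed point Q^π : S × A → ℝ, and for every initial Q⁰ : S × A → ℝ the iterates Q^{k+1} = T^π Q^k satisfy max over (s,a) of |Q^k(s,a) − Q^π(s,a)| ≤ γ^k · (max over (s,a) of |Q⁰(s,a) − Q^π(s,a)|); in particular Q^k(s,a) converges to Q^π(s,a) as k → ∞ for every (s,a). -/
open Real Finset Filter

variable {S A : Type*}

/-- The soft Bellman operator `T^pol` of `(r, p, γ, pol)`. -/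
noncomputable def softBellman [Fintype S] [Fintype A]
    (r : S × A → ℝ) (p : S × A → S → ℝ) (γ : ℝ) (pol : S → A → ℝ)
    (Q : S × A → ℝ) : S × A → ℝ :=
  fun sa => r sa + γ * ∑ s' : S, p sa s' *
    ∑ a' : A, (pol s' a' * Q (s', a') + Real.negMulLog (pol s' a'))

/-!
The entropy and reward terms cancel in `T Q₁ - T Q₂`, which is `γ` times a doubly averaged
difference `Q₁ - Q₂`; averaging does not increase the sup norm, so `T` is a `γ`-contraction for
the sup metric on `S × A → ℝ`. Banach's fixed point theorem gives the unique fixed point, and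
iterating the Lipschitz bound against the fixed point gives the geometric rate.
-/

theorem dist_pi_eq_iSup {ι : Type*} [Fintype ι] {X : ι → Type*} [∀ i, PseudoMetricSpace (X i)]
    (f g : ∀ i, X i) : dist f g = ⨆ i, dist (f i) (g i) :=
  le_antisymm
    ((dist_pi_le_iff (Real.iSup_nonneg fun _ => dist_nonneg)).2 fun i =>
      le_ciSup (Finite.bddAbove_range fun i => dist (f i) (g i)) i)
    (Real.iSup_le (fun i => dist_le_pi_dist f g i) dist_nonneg)

theorem abs_sum_mul_le_of_abs_le {ι : Type*} (s : Finset ι) {w f : ι → ℝ} {C : ℝ}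
    (hw0 : ∀ i ∈ s, 0 ≤ w i) (hw1 : ∑ i ∈ s, w i = 1) (hf : ∀ i ∈ s, |f i| ≤ C) :
    |∑ i ∈ s, w i * f i| ≤ C :=
  calc |∑ i ∈ s, w i * f i| ≤ ∑ i ∈ s, w i * |f i| := by
        refine (abs_sum_le_sum_abs _ _).trans_eq (sum_congr rfl fun i hi => ?_)
        rw [abs_mul, abs_of_nonneg (hw0 i hi)]
    _ ≤ ∑ i ∈ s, w i * C := sum_le_sum fun i hi => mul_le_mul_of_nonneg_left (hf i hi) (hw0 i hi)
    _ = C := by rw [← sum_mul, hw1, one_mul]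

theorem LipschitzWith.dist_iterate_le_of_isFixedPt {α : Type*} [PseudoMetricSpace α]
    {K : NNReal} {f : α → α} (hf : LipschitzWith K f) {y : α} (hy : Function.IsFixedPt f y)
    (x : α) (n : ℕ) : dist (f^[n] x) y ≤ K ^ n * dist x y := by
  simpa [(hy.iterate n).eq] using (hf.iterate n).dist_le_mul x y

section SoftBellman

variable [Fintype S] [Fintype A] (r : S × A → ℝ) {p : S × A → S → ℝ} {γ : ℝ} {pol : S → A → ℝ}

theorem softBellman_sub_softBellman (Q₁ Q₂ : S × A → ℝ) (sa : S × A) :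
    softBellman r p γ pol Q₁ sa - softBellman r p γ pol Q₂ sa =
      γ * ∑ s' : S, p sa s' * ∑ a' : A, pol s' a' * (Q₁ (s', a') - Q₂ (s', a')) := by
  simp only [softBellman, add_sub_add_left_eq_sub, ← mul_sub, ← sum_sub_distrib,
    add_sub_add_right_eq_sub]

theorem dist_softBellman_le (hp0 : ∀ sa s', 0 ≤ p sa s') (hp1 : ∀ sa, ∑ s' : S, p sa s' = 1)
    (hpol0 : ∀ s a, 0 ≤ pol s a) (hpol1 : ∀ s, ∑ a : A, pol s a = 1) (hγ0 : 0 ≤ γ)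
    (Q₁ Q₂ : S × A → ℝ) :
    dist (softBellman r p γ pol Q₁) (softBellman r p γ pol Q₂) ≤ γ * dist Q₁ Q₂ := by
  refine (dist_pi_le_iff (by positivity)).2 fun sa => ?_
  rw [Real.dist_eq, softBellman_sub_softBellman, abs_mul, abs_of_nonneg hγ0]
  gcongr
  refine abs_sum_mul_le_of_abs_le _ (fun s' _ => hp0 sa s') (hp1 sa) fun s' _ => ?_
  refine abs_sum_mul_le_of_abs_le _ (fun a' _ => hpol0 s' a') (hpol1 s') fun a' _ => ?_
  exact dist_le_pi_dist Q₁ Q₂ (s', a')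

theorem contractingWith_softBellman (hp0 : ∀ sa s', 0 ≤ p sa s')
    (hp1 : ∀ sa, ∑ s' : S, p sa s' = 1) (hpol0 : ∀ s a, 0 ≤ pol s a)
    (hpol1 : ∀ s, ∑ a : A, pol s a = 1) (hγ0 : 0 ≤ γ) (hγ1 : γ < 1) :
    ContractingWith γ.toNNReal (softBellman r p γ pol) :=
  ⟨Real.toNNReal_lt_one.2 hγ1, LipschitzWith.of_dist_le_mul fun Q₁ Q₂ => by
    rw [Real.coe_toNNReal γ hγ0]
    exact dist_softBellman_le r hp0 hp1 hpol0 hpol1 hγ0 Q₁ Q₂⟩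

end SoftBellman

theorem soft_policy_evaluation_general
    [Fintype S] [Fintype A]
    (p : S × A → S → ℝ) (hp0 : ∀ sa s', 0 ≤ p sa s') (hp1 : ∀ sa, ∑ s' : S, p sa s' = 1)
    (pol : S → A → ℝ) (hpol0 : ∀ s a, 0 ≤ pol s a) (hpol1 : ∀ s, ∑ a : A, pol s a = 1)
    (r : S × A → ℝ) (γ : ℝ) (hγ0 : 0 ≤ γ) (hγ1 : γ < 1) :
    ∃ Qpol : S × A → ℝ,
      softBellman r p γ pol Qpol = Qpol ∧
      (∀ Q' : S × A → ℝ, softBellman r p γ pol Q' = Q' → Q' = Qpol) ∧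
      (∀ Q0 : S × A → ℝ, ∀ k : ℕ,
        (⨆ sa : S × A, |(softBellman r p γ pol)^[k] Q0 sa - Qpol sa|) ≤
          γ ^ k * ⨆ sa : S × A, |Q0 sa - Qpol sa|) ∧
      (∀ Q0 : S × A → ℝ, ∀ sa : S × A,
        Tendsto (fun k => (softBellman r p γ pol)^[k] Q0 sa) atTop (nhds (Qpol sa))) := by
  have hT := contractingWith_softBellman r hp0 hp1 hpol0 hpol1 hγ0 hγ1
  refine ⟨ContractingWith.fixedPoint _ hT, hT.fixedPoint_isFixedPt,
    fun Q hQ => hT.fixedPoint_unique hQ, fun Q0 k => ?_,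
    fun Q0 => tendsto_pi_nhds.1 (hT.tendsto_iterate_fixedPoint Q0)⟩
  simp_rw [← Real.dist_eq, ← dist_pi_eq_iSup]
  simpa [Real.coe_toNNReal γ hγ0] using
    hT.toLipschitzWith.dist_iterate_le_of_isFixedPt hT.fixedPoint_isFixedPt Q0 k

/-- Soft Policy Evaluation (Lemma 1): the soft Bellman operator has a unique fixed point,
the iterates converge to it geometrically fast, and in particular pointwise. -/
theorem soft_policy_evaluation
    [Fintype S] [Fintype A] [Nonempty S] [Nonempty A]
    (p : S × A → S → ℝ) (hp0 : ∀ sa s', 0 ≤ p sa s') (hp1 : ∀ sa, ∑ s' : S, p sa s' = 1)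
    (pol : S → A → ℝ) (hpol0 : ∀ s a, 0 ≤ pol s a) (hpol1 : ∀ s, ∑ a : A, pol s a = 1)
    (r : S × A → ℝ) (γ : ℝ) (hγ0 : 0 ≤ γ) (hγ1 : γ < 1) :
    ∃ Qpol : S × A → ℝ,
      softBellman r p γ pol Qpol = Qpol ∧
      (∀ Q' : S × A → ℝ, softBellman r p γ pol Q' = Q' → Q' = Qpol) ∧
      (∀ Q0 : S × A → ℝ, ∀ k : ℕ,
        (⨆ sa : S × A, |(softBellman r p γ pol)^[k] Q0 sa - Qpol sa|) ≤
          γ ^ k * ⨆ sa : S × A, |Q0 sa - Qpol sa|) ∧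
      (∀ Q0 : S × A → ℝ, ∀ sa : S × A,
        Tendsto (fun k => (softBellman r p γ pol)^[k] Q0 sa) atTop (nhds (Qpol sa))) :=
  soft_policy_evaluation_general p hp0 hp1 pol hpol0 hpol1 r γ hγ0 hγ1
end

section
/- (Soft Policy Improvement, Lemma 2) Let π_old and π_new be policies, let Q_old be a fixed point of the soft Bellman operator T^{π_old}, and suppose that for every state s, ∑_a (π_new(s)(a)·Q_old(s,a) + negMulLog(π_new(s)(a))) ≥ ∑_a (π_old(s)(a)·Q_old(s,a) + negMulLog(π_old(s)(a))). Then the fixed point Q_new of T^{π_new} satisfies Q_new(s,a) ≥ Q_old(s,a) for all (s,a). -/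
/-!
Write `V^π Q (s) = ∑ₐ (π(s)(a) Q(s,a) + negMulLog π(s)(a))` for the soft value. The improvement
hypothesis says `V^{π_old} Q_old ≤ V^{π_new} Q_old`, so `Q_old = T^{π_old} Q_old ≤ T^{π_new} Q_old`.
Since `T^{π_new} Q₁ - T^{π_new} Q₂` is `γ` times an average of `Q₁ - Q₂`, the largest value `M`
of `Q_old - Q_new = Q_old - T^{π_new} Q_new` satisfies `M ≤ γ M`, hence `M ≤ 0`.
-/

open Real Finset Filter

variable {S A : Type*}

theorem Finset.sum_mul_le_of_le {ι : Type*} (s : Finset ι) {w f : ι → ℝ} {M : ℝ}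
    (hw0 : ∀ i ∈ s, 0 ≤ w i) (hw1 : ∑ i ∈ s, w i = 1) (hf : ∀ i ∈ s, f i ≤ M) :
    ∑ i ∈ s, w i * f i ≤ M :=
  calc ∑ i ∈ s, w i * f i ≤ ∑ i ∈ s, w i * M :=
        sum_le_sum fun i hi => mul_le_mul_of_nonneg_left (hf i hi) (hw0 i hi)
    _ = M := by rw [← sum_mul, hw1, one_mul]

theorem le_of_forall_sub_le_mul {ι : Type*} [Finite ι] {f g : ι → ℝ} {γ : ℝ} (hγ1 : γ < 1)
    (h : ∀ M, (∀ i, f i - g i ≤ M) → ∀ i, f i - g i ≤ γ * M) : f ≤ g := by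
  intro i
  have : Nonempty ι := ⟨i⟩
  obtain ⟨j, hj⟩ := Finite.exists_max fun k => f k - g k
  have hmax_nonpos : f j - g j ≤ 0 := by nlinarith [h _ hj j]
  linarith [hj i]

section SoftBellman

variable [Fintype A]

noncomputable def softValue (pol : S → A → ℝ) (Q : S × A → ℝ) (s : S) : ℝ :=
  ∑ a : A, (pol s a * Q (s, a) + Real.negMulLog (pol s a))

theorem softBellman_apply [Fintype S] (r : S × A → ℝ) (p : S × A → S → ℝ) (γ : ℝ)
    (pol : S → A → ℝ) (Q : S × A → ℝ) (sa : S × A) :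
    softBellman r p γ pol Q sa = r sa + γ * ∑ s' : S, p sa s' * softValue pol Q s' :=
  rfl

theorem softValue_sub_softValue (pol : S → A → ℝ) (Q₁ Q₂ : S × A → ℝ) (s : S) :
    softValue pol Q₁ s - softValue pol Q₂ s = ∑ a : A, pol s a * (Q₁ (s, a) - Q₂ (s, a)) := by
  simp only [softValue, ← sum_sub_distrib]
  exact sum_congr rfl fun a _ => by ring

theorem softBellman_le_softBellman_of_softValue_le [Fintype S] {p : S × A → S → ℝ}
    (hp0 : ∀ sa s', 0 ≤ p sa s') {γ : ℝ} (hγ0 : 0 ≤ γ) {pol pol' : S → A → ℝ} {Q : S × A → ℝ}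
    (h : ∀ s, softValue pol Q s ≤ softValue pol' Q s) (r : S × A → ℝ) :
    softBellman r p γ pol Q ≤ softBellman r p γ pol' Q := fun sa => by
  simp only [softBellman_apply]
  gcongr with s' _
  exacts [hp0 sa s', h s']

theorem softBellman_sub_softBellman_le [Fintype S] {p : S × A → S → ℝ} (hp0 : ∀ sa s', 0 ≤ p sa s')
    (hp1 : ∀ sa, ∑ s' : S, p sa s' = 1) (r : S × A → ℝ) {γ : ℝ} (hγ0 : 0 ≤ γ)
    {pol : S → A → ℝ} (hpol0 : ∀ s a, 0 ≤ pol s a) (hpol1 : ∀ s, ∑ a : A, pol s a = 1)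
    {Q₁ Q₂ : S × A → ℝ} {M : ℝ} (hM : ∀ sa, Q₁ sa - Q₂ sa ≤ M) (sa : S × A) :
    softBellman r p γ pol Q₁ sa - softBellman r p γ pol Q₂ sa ≤ γ * M := by
  have hvalue : ∀ s, softValue pol Q₁ s - softValue pol Q₂ s ≤ M := fun s => by
    rw [softValue_sub_softValue]
    exact sum_mul_le_of_le _ (fun a _ => hpol0 s a) (hpol1 s) fun a _ => hM (s, a)
  have hmean : ∑ s', p sa s' * (softValue pol Q₁ s' - softValue pol Q₂ s') ≤ M :=
    sum_mul_le_of_le _ (fun s' _ => hp0 sa s') (hp1 sa) fun s' _ => hvalue s'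
  simp only [softBellman_apply, mul_sub, sum_sub_distrib] at hmean ⊢
  nlinarith

end SoftBellman

theorem soft_policy_improvement_general
    [Fintype S] [Fintype A]
    (p : S × A → S → ℝ) (hp0 : ∀ sa s', 0 ≤ p sa s') (hp1 : ∀ sa, ∑ s' : S, p sa s' = 1)
    (r : S × A → ℝ) (γ : ℝ) (hγ0 : 0 ≤ γ) (hγ1 : γ < 1)
    (polOld : S → A → ℝ)
    (polNew : S → A → ℝ) (hpolNew0 : ∀ s a, 0 ≤ polNew s a) (hpolNew1 : ∀ s, ∑ a : A, polNew s a = 1)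
    (Qold : S × A → ℝ) (hQold : softBellman r p γ polOld Qold = Qold)
    (himp : ∀ s : S,
      ∑ a : A, (polOld s a * Qold (s, a) + Real.negMulLog (polOld s a)) ≤
        ∑ a : A, (polNew s a * Qold (s, a) + Real.negMulLog (polNew s a)))
    (Qnew : S × A → ℝ) (hQnew : softBellman r p γ polNew Qnew = Qnew) :
    ∀ sa, Qold sa ≤ Qnew sa := by
  have hsub : Qold ≤ softBellman r p γ polNew Qold :=
    calc Qold = softBellman r p γ polOld Qold := hQold.symm
      _ ≤ softBellman r p γ polNew Qold :=
        softBellman_le_softBellman_of_softValue_le hp0 hγ0 himp r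
  refine le_of_forall_sub_le_mul hγ1 fun M hM sa => ?_
  calc Qold sa - Qnew sa
      ≤ softBellman r p γ polNew Qold sa - softBellman r p γ polNew Qnew sa := by
        rw [hQnew]; linarith [hsub sa]
    _ ≤ γ * M := softBellman_sub_softBellman_le hp0 hp1 r hγ0 hpolNew0 hpolNew1 hM sa

/-- Soft Policy Improvement (Lemma 2): if `pol_new` improves the soft value of `Q_old`
at every state, then the soft Q-function of `pol_new` dominates that of `pol_old`. -/
theorem soft_policy_improvement
    [Fintype S] [Fintype A] [Nonempty S] [Nonempty A]
    (p : S × A → S → ℝ) (hp0 : ∀ sa s', 0 ≤ p sa s') (hp1 : ∀ sa, ∑ s' : S, p sa s' = 1)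
    (r : S × A → ℝ) (γ : ℝ) (hγ0 : 0 ≤ γ) (hγ1 : γ < 1)
    (polOld : S → A → ℝ) (hpolOld0 : ∀ s a, 0 ≤ polOld s a) (hpolOld1 : ∀ s, ∑ a : A, polOld s a = 1)
    (polNew : S → A → ℝ) (hpolNew0 : ∀ s a, 0 ≤ polNew s a) (hpolNew1 : ∀ s, ∑ a : A, polNew s a = 1)
    (Qold : S × A → ℝ) (hQold : softBellman r p γ polOld Qold = Qold)
    (himp : ∀ s : S,
      ∑ a : A, (polOld s a * Qold (s, a) + Real.negMulLog (polOld s a)) ≤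
        ∑ a : A, (polNew s a * Qold (s, a) + Real.negMulLog (polNew s a)))
    (Qnew : S × A → ℝ) (hQnew : softBellman r p γ polNew Qnew = Qnew) :
    ∀ sa, Qold sa ≤ Qnew sa :=
  soft_policy_improvement_general p hp0 hp1 r γ hγ0 hγ1 polOld polNew hpolNew0 hpolNew1 Qold hQold
    himp Qnew hQnew
end
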